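/- The function f_P defined from the crossover closure is a quasi-metric (directed distance): for all populations P₁, P₂, P₃, f_P(P₁,P₁) = 0 and f_P(P₁,P₃) ≤ f_P(P₁,P₂) + f_P(P₂,P₃), where f_P(P₁,P₂) is the minimal k with P₂ ∈ closure^k({P₁}) if P₂ is reachable, and k* (the stabilization time of the closure) otherwise. -/
import Mathlib


/-- The `n`-points crossover relation on pairs of strings of length `ℓ` over `α`:
cut points `k 0 = 0 ≤ k 1 ≤ ⋯ ≤ k n ≤ k (n+1) = ℓ`, copying straight on even
segments and swapped on odd segments. -/
def XoRel (α : Type*) (ℓ n : ℕ) (x y x' y' : Fin ℓ → α) : Prop :=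
  ∃ k : Fin (n + 2) → ℕ,
    k 0 = 0 ∧ k (Fin.last (n + 1)) = ℓ ∧ Monotone k ∧
    ∀ i : Fin (n + 1), ∀ p : Fin ℓ,
      k i.castSucc ≤ (p : ℕ) → (p : ℕ) < k i.succ →
      if (i : ℕ) % 2 = 0 then x' p = x p ∧ y' p = y p
      else x' p = y p ∧ y' p = x p

/-- The `n`-points crossover relation on populations: every member of `P₂` is an
offspring of an `n`-points crossover of two members of `P₁`. -/
def PXoRel (α : Type*) (ℓ n : ℕ) (P₁ P₂ : Set (Fin ℓ → α)) : Prop :=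
  ∀ x' ∈ P₂, ∃ y' : Fin ℓ → α, ∃ x ∈ P₁, ∃ y ∈ P₁, XoRel α ℓ n x y x' y'

/-- The crossover closure on sets of populations. -/
def xoCl (α : Type*) (ℓ n : ℕ) (A : Set (Set (Fin ℓ → α))) : Set (Set (Fin ℓ → α)) :=
  ⋃ P ∈ A, {P' | PXoRel α ℓ n P P'}

/-- The uniform stabilization time of the crossover closure. -/
noncomputable def kstar (α : Type*) [Fintype α] (ℓ n : ℕ) : ℕ :=
  sInf {k : ℕ | ∀ U : Set (Set (Fin ℓ → α)), (xoCl α ℓ n)^[k + 1] U = (xoCl α ℓ n)^[k] U}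

open Classical in
/-- The directional crossover distance between populations. -/
noncomputable def fP (α : Type*) [Fintype α] (ℓ n : ℕ) (P₁ P₂ : Set (Fin ℓ → α)) : ℕ :=
  if P₂ ∈ (xoCl α ℓ n)^[kstar α ℓ n] {P₁} then
    sInf {k : ℕ | P₂ ∈ (xoCl α ℓ n)^[k] {P₁}}
  else kstar α ℓ n

section Aux

variable {α : Type*} {ℓ n : ℕ}

lemma xoRel_refl (x : Fin ℓ → α) : XoRel α ℓ n x x x x := by
  refine ⟨fun i => if i = 0 then 0 else ℓ, by simp, ?_, ?_, ?_⟩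
  · have : (Fin.last (n + 1) : Fin (n + 2)) ≠ 0 := by
      simp [Fin.ext_iff, Fin.last]
    simp [this]
  · intro i j hij
    dsimp only
    split_ifs with h1 h2 h2
    · exact le_rfl
    · exact Nat.zero_le _
    · exact absurd (Fin.le_zero_iff.mp (h2 ▸ hij)) h1
    · exact le_rfl
  · intro i p _ _
    split <;> exact ⟨rfl, rfl⟩

lemma pxoRel_refl (P : Set (Fin ℓ → α)) : PXoRel α ℓ n P P :=
  fun x hx => ⟨x, x, hx, x, hx, xoRel_refl x⟩

lemma xoCl_mono {A B : Set (Set (Fin ℓ → α))} (h : A ⊆ B) :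
    xoCl α ℓ n A ⊆ xoCl α ℓ n B := by
  intro P hP
  simp only [xoCl, Set.mem_iUnion] at hP ⊢
  obtain ⟨Q, hQ, hPQ⟩ := hP
  exact ⟨Q, h hQ, hPQ⟩

lemma subset_xoCl (A : Set (Set (Fin ℓ → α))) : A ⊆ xoCl α ℓ n A := by
  intro P hP
  simp only [xoCl, Set.mem_iUnion]
  exact ⟨P, hP, pxoRel_refl P⟩

lemma iterate_xoCl_mono {A B : Set (Set (Fin ℓ → α))} (h : A ⊆ B) (k : ℕ) :
    (xoCl α ℓ n)^[k] A ⊆ (xoCl α ℓ n)^[k] B := by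
  induction k with
  | zero => exact h
  | succ k ih => simpa [Function.iterate_succ_apply'] using xoCl_mono ih

lemma iterate_xoCl_le {a b : ℕ} (hab : a ≤ b) (A : Set (Set (Fin ℓ → α))) :
    (xoCl α ℓ n)^[a] A ⊆ (xoCl α ℓ n)^[b] A := by
  induction b with
  | zero => simpa [Nat.le_zero.mp hab]
  | succ b ih =>
    rcases Nat.lt_or_ge a (b+1) with h | h
    · refine (ih (Nat.lt_succ_iff.mp h)).trans ?_
      rw [Function.iterate_succ_apply']
      exact subset_xoCl _
    · have : a = b + 1 := le_antisymm hab h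
      subst this; exact subset_of_eq rfl

lemma stable_propagate {j : ℕ} {U : Set (Set (Fin ℓ → α))}
    (h : (xoCl α ℓ n)^[j+1] U = (xoCl α ℓ n)^[j] U) :
    ∀ m, j ≤ m → (xoCl α ℓ n)^[m+1] U = (xoCl α ℓ n)^[m] U := by
  intro m hm
  induction m with
  | zero => simpa [Nat.le_zero.mp hm] using h
  | succ m ih =>
    rcases Nat.lt_or_ge j (m+1) with h' | h'
    · have h1 := ih (Nat.lt_succ_iff.mp h')
      calc (xoCl α ℓ n)^[m+1+1] U
          = xoCl α ℓ n ((xoCl α ℓ n)^[m+1] U) := Function.iterate_succ_apply' _ _ _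
        _ = xoCl α ℓ n ((xoCl α ℓ n)^[m] U) := by rw [h1]
        _ = (xoCl α ℓ n)^[m+1] U := (Function.iterate_succ_apply' _ _ _).symm
    · have : j = m + 1 := le_antisymm hm h'
      subst this; exact h

lemma kstar_set_nonempty (α : Type*) [Fintype α] (ℓ n : ℕ) :
    {k : ℕ | ∀ U : Set (Set (Fin ℓ → α)), (xoCl α ℓ n)^[k + 1] U = (xoCl α ℓ n)^[k] U}.Nonempty := by
  classical
  set N := Fintype.card (Set (Fin ℓ → α)) with hN
  refine ⟨N + 1, fun U => ?_⟩
  have key : ∀ k : ℕ, (∃ j ≤ k, (xoCl α ℓ n)^[j+1] U = (xoCl α ℓ n)^[j] U) ∨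
      k ≤ ((xoCl α ℓ n)^[k] U).ncard := by
    intro k
    induction k with
    | zero => exact Or.inr (Nat.zero_le _)
    | succ k ih =>
      rcases ih with ⟨j, hj, hje⟩ | hc
      · exact Or.inl ⟨j, hj.trans (Nat.le_succ k), hje⟩
      · by_cases he : (xoCl α ℓ n)^[k+1] U = (xoCl α ℓ n)^[k] U
        · exact Or.inl ⟨k, Nat.le_succ k, he⟩
        · right
          have hsub : (xoCl α ℓ n)^[k] U ⊂ (xoCl α ℓ n)^[k+1] U :=
            (iterate_xoCl_le (Nat.le_succ k) U).ssubset_of_ne (Ne.symm he)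
          have hfin : ((xoCl α ℓ n)^[k+1] U).Finite := Set.toFinite _
          have := Set.ncard_lt_ncard hsub hfin
          omega
  rcases key (N + 1) with ⟨j, hj, hje⟩ | hc
  · exact stable_propagate hje (N + 1) hj
  · exfalso
    have : ((xoCl α ℓ n)^[N+1] U).ncard ≤ N := by
      simpa [hN] using Set.ncard_le_ncard (Set.subset_univ _) (Set.toFinite _) |>.trans
        (le_of_eq (by simp [Set.ncard_univ, hN]))
    omega

lemma kstar_stable (α : Type*) [Fintype α] (ℓ n : ℕ) (U : Set (Set (Fin ℓ → α))) :
    ∀ m, kstar α ℓ n ≤ m → (xoCl α ℓ n)^[m] U = (xoCl α ℓ n)^[kstar α ℓ n] U := by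
  have hmem := Nat.sInf_mem (kstar_set_nonempty α ℓ n)
  intro m hm
  induction m with
  | zero => simp [Nat.le_zero.mp hm]
  | succ m ih =>
    rcases Nat.lt_or_ge (kstar α ℓ n) (m+1) with h' | h'
    · have hle := Nat.lt_succ_iff.mp h'
      rw [Function.iterate_succ_apply']
      rw [← Function.iterate_succ_apply' (xoCl α ℓ n) m U]
      rw [stable_propagate (hmem U) m hle]
      exact ih hle
    · have : kstar α ℓ n = m + 1 := le_antisymm hm h'
      rw [this]

end Aux

/-- The directional crossover distance is a quasi-metric. -/
theorem fP_quasimetric (α : Type*) [Fintype α] (ℓ n : ℕ) (hn : 1 ≤ n) (hℓ : n < ℓ) :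
    (∀ P : Set (Fin ℓ → α), fP α ℓ n P P = 0) ∧
    ∀ P₁ P₂ P₃ : Set (Fin ℓ → α),
      fP α ℓ n P₁ P₃ ≤ fP α ℓ n P₁ P₂ + fP α ℓ n P₂ P₃ := by
  classical
  set K := kstar α ℓ n with hK
  have hle : ∀ P Q : Set (Fin ℓ → α), fP α ℓ n P Q ≤ K := by
    intro P Q
    rw [fP]
    split
    · exact Nat.sInf_le (by assumption)
    · exact le_rfl
  constructor
  · intro P
    have h0 : P ∈ (xoCl α ℓ n)^[K] {P} :=
      iterate_xoCl_le (Nat.zero_le K) {P} (by simp)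
    rw [fP, if_pos h0]
    exact Nat.sInf_eq_zero.mpr (Or.inl (by simp))
  · intro P₁ P₂ P₃
    by_cases h12 : P₂ ∈ (xoCl α ℓ n)^[K] {P₁}
    · by_cases h23 : P₃ ∈ (xoCl α ℓ n)^[K] {P₂}
      · have hne1 : {k | P₂ ∈ (xoCl α ℓ n)^[k] {P₁}}.Nonempty := ⟨K, h12⟩
        have hne2 : {k | P₃ ∈ (xoCl α ℓ n)^[k] {P₂}}.Nonempty := ⟨K, h23⟩
        have ha := Nat.sInf_mem hne1
        have hb := Nat.sInf_mem hne2
        simp only [Set.mem_setOf_eq] at ha hb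
        set a := sInf {k | P₂ ∈ (xoCl α ℓ n)^[k] {P₁}} with hadef
        set b := sInf {k | P₃ ∈ (xoCl α ℓ n)^[k] {P₂}} with hbdef
        have hsub : ({P₂} : Set (Set (Fin ℓ → α))) ⊆ (xoCl α ℓ n)^[a] {P₁} :=
          Set.singleton_subset_iff.mpr ha
        have h3ab : P₃ ∈ (xoCl α ℓ n)^[a + b] {P₁} := by
          have := iterate_xoCl_mono hsub b hb
          rwa [← Function.iterate_add_apply, Nat.add_comm b a] at this
        have h3K : P₃ ∈ (xoCl α ℓ n)^[K] {P₁} := by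
          have hst := kstar_stable α ℓ n ({P₁} : Set (Set (Fin ℓ → α)))
            (max (a + b) K) (le_max_right _ _)
          rw [← hK] at hst
          rw [← hst]
          exact iterate_xoCl_le (le_max_left _ _) _ h3ab
        rw [fP, if_pos h3K, fP, if_pos h12, fP, if_pos h23]
        exact Nat.sInf_le h3ab
      · have : fP α ℓ n P₂ P₃ = K := by rw [fP, if_neg h23, hK]
        rw [this]
        exact (hle P₁ P₃).trans (Nat.le_add_left K _)
    · have : fP α ℓ n P₁ P₂ = K := by rw [fP, if_neg h12, hK]
      rw [this]
      exact (hle P₁ P₃).trans (Nat.le_add_right K _)
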